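/- For all integers k ≥ 3, r ≥ 2 and n ≥ 2, one has c_{r,P_{k,2}}(n) = |C_{r,P_{k,2}}(T_{k-1}(n))| = r^{ex(n,K_k)}. Moreover, for k = 3 the Turán graph T_2(n) is the unique n-vertex graph G with |C_{r,P_{3,2}}(G)| = c_{r,P_{3,2}}(n). -/

import Mathlib

open SimpleGraph Finset

namespace ERExt

/-- The edges of `G` with both endpoints in `t`. -/
def cliqueEdges {V : Type*} (G : SimpleGraph V) (t : Finset V) : Set (Sym2 V) :=
  {e | e ∈ G.edgeSet ∧ ∀ v ∈ e, v ∈ t}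

/-- An `r`-coloring of the edges of `G` is `P_{k,s}`-free if fewer than `s` distinct colors
appear on the edges of every copy of `K_k` in `G`. -/
def PkFree {V : Type*} (G : SimpleGraph V) (r k s : ℕ) (c : G.edgeSet → Fin r) : Prop :=
  ∀ t : Finset V, G.IsNClique k t →
    Set.ncard {col : Fin r | ∃ e : G.edgeSet, (∀ v ∈ (e : Sym2 V), v ∈ t) ∧ c e = col} < s

/-- The number of `P_{k,s}`-free `r`-colorings of `G`, i.e. `|C_{r,P_{k,s}}(G)|`. -/
noncomputable def numPkFree {V : Type*} (G : SimpleGraph V) (r k s : ℕ) : ℕ :=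
  Nat.card {c : G.edgeSet → Fin r // PkFree G r k s c}

/-- `c_{r,P_{k,s}}(n)`, the maximum of `|C_{r,P_{k,s}}(G)|` over `n`-vertex graphs `G`. -/
noncomputable def maxPkFree (n r k s : ℕ) : ℕ :=
  sSup {N | ∃ G : SimpleGraph (Fin n), numPkFree G r k s = N}

/-- The Turán number `ex(n, K_k)`. -/
noncomputable def turanNum (n k : ℕ) : ℕ :=
  sSup {N | ∃ G : SimpleGraph (Fin n), G.CliqueFree k ∧ G.edgeSet.ncard = N}

/-- `A(k,j) = C(k,2) - ex(k, K_{j+1})`. -/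
noncomputable def Afun (k j : ℕ) : ℕ := k.choose 2 - turanNum k (j + 1)

/-- `s_0(k) = A(k,2) + 2`. -/
noncomputable def s0 (k : ℕ) : ℕ := Afun k 2 + 2

/-- `s_1(k) = C(k,2) - ⌊k/2⌋ + 2`. -/
def s1 (k : ℕ) : ℕ := k.choose 2 - k / 2 + 2

/-- `i*`, the least `i` with `A(k,k-i) ≥ s-2`. -/
noncomputable def iStar (k s : ℕ) : ℕ := sInf {i | s - 2 ≤ Afun k (k - i)}

/-- The quantity of which `r_0(k,s)` is the least integer strictly above, for `s ≤ s_0(k)`. -/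
noncomputable def r0low (k s : ℕ) : ℝ :=
  ((s : ℝ) - 1) ^ (((k : ℝ) - 1) / ((k : ℝ) - 2)) *
    ∏ i ∈ Finset.Icc 2 (iStar k s),
      ((s : ℝ) - (Afun k (k - i + 1) : ℝ) - 1) ^
        ((1 : ℝ) / (((k : ℝ) - (i : ℝ) - 1) * ((k : ℝ) - (i : ℝ))))

/-- `b(k,p,j) = min{ j·C(p,2), ⌊k/p⌋·C(p,2) + C(k - ⌊k/p⌋·p, 2) }`. -/
def bfun (k p j : ℕ) : ℕ :=
  min (j * p.choose 2) ((k / p) * p.choose 2 + (k - (k / p) * p).choose 2)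

/-- `L(k,s,p,j) = 1 + 2p(k-1)/(j(p-1))`. -/
noncomputable def Lfun (k s p j : ℕ) : ℝ :=
  1 + (2 * (p : ℝ) * ((k : ℝ) - 1)) / ((j : ℝ) * ((p : ℝ) - 1))

/-- `p*`, the largest `2 ≤ p ≤ k-1` with `b(k,p,k-1) ≤ C(k,2) - s + 2`. -/
noncomputable def pStar (k s : ℕ) : ℕ :=
  sSup {p | 2 ≤ p ∧ p ≤ k - 1 ∧ bfun k p (k - 1) ≤ k.choose 2 - s + 2}

/-- `j*`, the largest `1 ≤ j ≤ k-1` with `b(k,2,j) ≤ C(k,2) - s + 2`. -/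
noncomputable def jStar (k s : ℕ) : ℕ :=
  sSup {j | 1 ≤ j ∧ j ≤ k - 1 ∧ bfun k 2 j ≤ k.choose 2 - s + 2}

/-- The product `∏_{i=2}^{k-2} (s - A(k,k-i+1) - 1)^{1/((k-i-1)(k-i))}`. -/
noncomputable def prodMid (k s : ℕ) : ℝ :=
  ∏ i ∈ Finset.Icc 2 (k - 2),
    ((s : ℝ) - (Afun k (k - i + 1) : ℝ) - 1) ^
      ((1 : ℝ) / (((k : ℝ) - (i : ℝ) - 1) * ((k : ℝ) - (i : ℝ))))

/-- The quantity of which `r_0(k,s)` is the least integer strictly above, for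
`s_0(k) < s ≤ s_1(k)`. -/
noncomputable def r0mid (k s : ℕ) : ℝ :=
  ((s : ℝ) - (Afun k 2 : ℝ) - 1) ^ (Lfun k s (pStar k s) (k - 1)) * prodMid k s *
    ((s : ℝ) - 1) ^ (((k : ℝ) - 1) / ((k : ℝ) - 2))

/-- The quantity of which `r_0(k,s)` is the least integer strictly above, for `s > s_1(k)`. -/
noncomputable def r0high (k s : ℕ) : ℝ :=
  ((s : ℝ) - (Afun k 2 : ℝ) - 1) ^ (Lfun k s 2 (jStar k s)) * prodMid k s *
    ((s : ℝ) - 1) ^ (((k : ℝ) - 1) / ((k : ℝ) - 2))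

/-- The threshold `r_0(k,s)`: the least integer greater than the relevant quantity. -/
noncomputable def r0 (k s : ℕ) : ℕ :=
  if s ≤ s0 k then Nat.floor (r0low k s) + 1
  else if s ≤ s1 k then Nat.floor (r0mid k s) + 1
  else Nat.floor (r0high k s) + 1

/-- `r_1(k,s) = ⌈(s-1)^{(k-1)/(k-2)} - 1⌉`. -/
noncomputable def r1fun (k s : ℕ) : ℕ :=
  (⌈((s : ℝ) - 1) ^ (((k : ℝ) - 1) / ((k : ℝ) - 2)) - 1⌉).toNat

/-- `L_opt(k,s)`, the minimum of `L(k,s,p,j)` over admissible pairs `(p,j)`. -/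
noncomputable def Lopt (k s : ℕ) : ℝ :=
  sInf {x | ∃ p j : ℕ, 2 ≤ p ∧ p ≤ k - 1 ∧ 1 ≤ j ∧ j ≤ k - 1 ∧
    bfun k p j ≤ k.choose 2 - s + 2 ∧ x = Lfun k s p j}

/-- A graph is complete multipartite if vertices are adjacent exactly when they lie in
different classes of some partition. -/
def IsCompleteMultipartite' {n : ℕ} (G : SimpleGraph (Fin n)) : Prop :=
  ∃ f : Fin n → Fin n, ∀ v w, G.Adj v w ↔ f v ≠ f w

/-- A list-colored graph is `(K_k, ≥ s)`-free if no copy of `K_k` admits a choice of colors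
from the lists of its edges in which at least `s` distinct colors appear. -/
def GeSFree {V : Type*} (r k s : ℕ) (H : SimpleGraph V) (L : Sym2 V → Finset (Fin r)) : Prop :=
  ¬ ∃ (t : Finset V) (c : Sym2 V → Fin r), H.IsNClique k t ∧
      (∀ e ∈ cliqueEdges H t, c e ∈ L e) ∧
      s ≤ Set.ncard {col : Fin r | ∃ e ∈ cliqueEdges H t, c e = col}

/-- `e_j(H)`, the number of edges of `H` whose list has size `j`. -/
noncomputable def ej {V : Type*} {r : ℕ} (H : SimpleGraph V) (L : Sym2 V → Finset (Fin r))
    (j : ℕ) : ℕ :=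
  Set.ncard {e | e ∈ H.edgeSet ∧ (L e).card = j}

end ERExt

namespace ERExt

variable {n : ℕ}

/-- Two edges of `G` are directly related if they lie in a common `k`-clique. -/
def erel (G : SimpleGraph (Fin n)) (k : ℕ) (e f : G.edgeSet) : Prop :=
  ∃ t : Finset (Fin n), G.IsNClique k t ∧ (∀ v ∈ (e : Sym2 (Fin n)), v ∈ t) ∧
    (∀ v ∈ (f : Sym2 (Fin n)), v ∈ t)

/-- The setoid generated by `erel`. -/
def est (G : SimpleGraph (Fin n)) (k : ℕ) : Setoid G.edgeSet :=
  Relation.EqvGen.setoid (erel G k)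

lemma pkfree_iff (G : SimpleGraph (Fin n)) (k r : ℕ) (c : G.edgeSet → Fin r) :
    PkFree G r k 2 c ↔ ∀ e f, Relation.EqvGen (erel G k) e f → c e = c f := by
  constructor
  · intro h e f hef
    induction hef with
    | rel x y hxy =>
        obtain ⟨t, ht, hx, hy⟩ := hxy
        have h2 := h t ht
        have h1 : ({col : Fin r | ∃ e : G.edgeSet,
            (∀ v ∈ (e : Sym2 (Fin n)), v ∈ t) ∧ c e = col}).ncard ≤ 1 := by omega
        exact (Set.ncard_le_one (Set.toFinite _)).mp h1 (c x) ⟨x, hx, rfl⟩ (c y) ⟨y, hy, rfl⟩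
    | refl x => rfl
    | symm x y _ ih => exact ih.symm
    | trans x y z _ _ ih1 ih2 => exact ih1.trans ih2
  · intro h t ht
    have h1 : ({col : Fin r | ∃ e : G.edgeSet,
        (∀ v ∈ (e : Sym2 (Fin n)), v ∈ t) ∧ c e = col}).ncard ≤ 1 := by
      rw [Set.ncard_le_one (Set.toFinite _)]
      rintro a ⟨e, he, rfl⟩ b ⟨f, hf, rfl⟩
      exact h e f (Relation.EqvGen.rel _ _ ⟨t, ht, he, hf⟩)
    omega

/-- The `P_{k,2}`-free colorings correspond to colorings of the classes. -/
noncomputable def colEquiv (G : SimpleGraph (Fin n)) (k r : ℕ) :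
    {c : G.edgeSet → Fin r // PkFree G r k 2 c} ≃ (Quotient (est G k) → Fin r) where
  toFun c := Quotient.lift c.1 fun e f h => ((pkfree_iff G k r c.1).mp c.2) e f h
  invFun d := ⟨fun e => d (Quotient.mk (est G k) e),
    (pkfree_iff G k r _).mpr fun e f h => congrArg d (Quotient.sound h)⟩
  left_inv c := Subtype.ext rfl
  right_inv d := funext fun q => Quotient.inductionOn q fun e => rfl

lemma numPkFree_eq_pow (G : SimpleGraph (Fin n)) (k r : ℕ) :
    numPkFree G r k 2 = r ^ Nat.card (Quotient (est G k)) := by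
  rw [numPkFree, Nat.card_congr (colEquiv G k r), Nat.card_fun, Nat.card_eq_fintype_card,
    Fintype.card_fin]

lemma exists_repGraph (G : SimpleGraph (Fin n)) {k : ℕ} (hk : 3 ≤ k)
    (rep : Quotient (est G k) → G.edgeSet)
    (hrep : ∀ q, Quotient.mk (est G k) (rep q) = q) :
    ∃ H : SimpleGraph (Fin n),
      H.CliqueFree k ∧
      H.edgeSet = Set.range (fun q => ((rep q : G.edgeSet) : Sym2 (Fin n))) ∧
      H.edgeSet.ncard = Nat.card (Quotient (est G k)) := by
  set f : Quotient (est G k) → Sym2 (Fin n) := fun q => ((rep q : G.edgeSet) : Sym2 (Fin n))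
    with hf
  have hfE : ∀ q, f q ∈ G.edgeSet := fun q => (rep q).2
  have hinj : Function.Injective f := by
    intro q1 q2 h
    rw [← hrep q1, ← hrep q2]
    exact congrArg _ (Subtype.ext h)
  refine ⟨SimpleGraph.fromEdgeSet (Set.range f), ?_, ?_, ?_⟩
  case refine_2 =>
    rw [SimpleGraph.edgeSet_fromEdgeSet]
    ext e
    simp only [Set.mem_diff, Set.mem_setOf_eq, and_iff_left_iff_imp]
    rintro ⟨q, rfl⟩
    exact G.not_isDiag_of_mem_edgeSet (hfE q)
  case refine_3 =>
    rw [SimpleGraph.edgeSet_fromEdgeSet]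
    have : Set.range f \ {e | e.IsDiag} = Set.range f := by
      ext e
      simp only [Set.mem_diff, Set.mem_setOf_eq, and_iff_left_iff_imp]
      rintro ⟨q, rfl⟩
      exact G.not_isDiag_of_mem_edgeSet (hfE q)
    rw [show Set.range f \ Sym2.diagSet = Set.range f from this, ← Nat.card_coe_set_eq]
    exact Nat.card_congr (Equiv.ofInjective f hinj).symm
  -- CliqueFree
  have hle : SimpleGraph.fromEdgeSet (Set.range f) ≤ G := by
    have hmono := SimpleGraph.fromEdgeSet_mono
      (show Set.range f ⊆ G.edgeSet by rintro e ⟨q, rfl⟩; exact hfE q)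
    rwa [SimpleGraph.fromEdgeSet_edgeSet] at hmono
  intro t ht
  have htG : G.IsNClique k t := ht.mono hle
  have h3 : 3 ≤ t.card := htG.2 ▸ hk
  obtain ⟨a, ha⟩ := Finset.card_pos.mp (show 0 < t.card by omega)
  obtain ⟨b, hb'⟩ := Finset.card_pos.mp (show 0 < (t.erase a).card by
    rw [Finset.card_erase_of_mem ha]; omega)
  obtain ⟨c, hc'⟩ := Finset.card_pos.mp (show 0 < ((t.erase a).erase b).card by
    rw [Finset.card_erase_of_mem hb', Finset.card_erase_of_mem ha]; omega)
  have hba : b ≠ a := (Finset.mem_erase.mp hb').1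
  have hb : b ∈ t := (Finset.mem_erase.mp hb').2
  have hcb : c ≠ b := (Finset.mem_erase.mp hc').1
  have hca : c ≠ a := (Finset.mem_erase.mp (Finset.mem_erase.mp hc').2).1
  have hc : c ∈ t := (Finset.mem_erase.mp (Finset.mem_erase.mp hc').2).2
  have hadjab : (SimpleGraph.fromEdgeSet (Set.range f)).Adj a b := ht.1 ha hb (Ne.symm hba)
  have hadjac : (SimpleGraph.fromEdgeSet (Set.range f)).Adj a c := ht.1 ha hc (Ne.symm hca)
  have hmem1 : s(a, b) ∈ Set.range f := by
    have := (SimpleGraph.mem_edgeSet _).mpr hadjab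
    rw [SimpleGraph.edgeSet_fromEdgeSet] at this
    exact this.1
  have hmem2 : s(a, c) ∈ Set.range f := by
    have := (SimpleGraph.mem_edgeSet _).mpr hadjac
    rw [SimpleGraph.edgeSet_fromEdgeSet] at this
    exact this.1
  obtain ⟨q1, hq1⟩ := hmem1
  obtain ⟨q2, hq2⟩ := hmem2
  have hrel : erel G k (rep q1) (rep q2) := by
    refine ⟨t, htG, ?_, ?_⟩
    · intro v hv
      rw [show ((rep q1 : G.edgeSet) : Sym2 (Fin n)) = s(a, b) from hq1] at hv
      rcases Sym2.mem_iff.mp hv with rfl | rfl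
      exacts [ha, hb]
    · intro v hv
      rw [show ((rep q2 : G.edgeSet) : Sym2 (Fin n)) = s(a, c) from hq2] at hv
      rcases Sym2.mem_iff.mp hv with rfl | rfl
      exacts [ha, hc]
  have hq12 : q1 = q2 := by
    rw [← hrep q1, ← hrep q2]
    exact Quotient.sound (Relation.EqvGen.rel _ _ hrel)
  have : s(a, b) = s(a, c) := by rw [← hq1, ← hq2, hq12]
  exact hcb (Sym2.congr_right.mp this).symm

lemma bddAbove_turanSet (n k : ℕ) :
    BddAbove {N | ∃ G : SimpleGraph (Fin n), G.CliqueFree k ∧ G.edgeSet.ncard = N} := by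
  refine ⟨Nat.card (Sym2 (Fin n)), ?_⟩
  rintro N ⟨G, _, rfl⟩
  calc G.edgeSet.ncard ≤ (Set.univ : Set (Sym2 (Fin n))).ncard :=
        Set.ncard_le_ncard (Set.subset_univ _) Set.finite_univ
    _ = _ := Set.ncard_univ _

lemma le_turanNum {k : ℕ} (H : SimpleGraph (Fin n)) (h : H.CliqueFree k) :
    H.edgeSet.ncard ≤ turanNum n k :=
  le_csSup (bddAbove_turanSet n k) ⟨H, h, rfl⟩

lemma ncard_eq_card_edgeFinset (G : SimpleGraph (Fin n)) [Fintype G.edgeSet] :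
    G.edgeSet.ncard = G.edgeFinset.card := by
  rw [SimpleGraph.edgeFinset_card, ← Nat.card_eq_fintype_card, Nat.card_coe_set_eq]

lemma turanGraph_ncard {k : ℕ} (hk : 3 ≤ k) :
    (SimpleGraph.turanGraph n (k - 1)).edgeSet.ncard = turanNum n k := by
  classical
  have hkk : k - 1 + 1 = k := by omega
  apply le_antisymm
  · apply le_csSup (bddAbove_turanSet n k)
    refine ⟨_, ?_, rfl⟩
    have := SimpleGraph.turanGraph_cliqueFree (n := n) (r := k - 1) (by omega)
    rwa [hkk] at this
  · apply csSup_le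
    · exact ⟨_, ⊥, SimpleGraph.cliqueFree_bot (by omega), rfl⟩
    · rintro N ⟨H, hH, rfl⟩
      have htm := SimpleGraph.isTuranMaximal_turanGraph (n := n) (r := k - 1) (by omega)
      have := htm.2 (G' := H) (by rwa [hkk])
      rwa [ncard_eq_card_edgeFinset, ncard_eq_card_edgeFinset]

lemma card_classes_le (G : SimpleGraph (Fin n)) {k : ℕ} (hk : 3 ≤ k) :
    Nat.card (Quotient (est G k)) ≤ turanNum n k := by
  obtain ⟨H, hcf, _, hcard⟩ := exists_repGraph G hk (fun q => q.out) (fun q => q.out_eq)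
  rw [← hcard]
  exact le_turanNum H hcf

lemma numPkFree_le (G : SimpleGraph (Fin n)) {k r : ℕ} (hk : 3 ≤ k) (hr : 1 ≤ r) :
    numPkFree G r k 2 ≤ r ^ turanNum n k := by
  rw [numPkFree_eq_pow]
  exact Nat.pow_le_pow_right hr (card_classes_le G hk)

lemma eqvgen_eq_of_cliqueFree (G : SimpleGraph (Fin n)) {k : ℕ} (hcf : G.CliqueFree k)
    {e f : G.edgeSet} (h : Relation.EqvGen (erel G k) e f) : e = f := by
  induction h with
  | rel x y hxy => obtain ⟨t, ht, _, _⟩ := hxy; exact absurd ht (hcf t)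
  | refl x => rfl
  | symm x y _ ih => exact ih.symm
  | trans x y z _ _ ih1 ih2 => exact ih1.trans ih2

lemma card_classes_of_cliqueFree (G : SimpleGraph (Fin n)) {k : ℕ} (hcf : G.CliqueFree k) :
    Nat.card (Quotient (est G k)) = G.edgeSet.ncard := by
  rw [← Nat.card_coe_set_eq]
  apply Nat.card_congr
  apply Equiv.symm
  refine Equiv.ofBijective (Quotient.mk (est G k)) ⟨?_, fun q => q.exists_rep⟩
  intro e f h
  exact eqvgen_eq_of_cliqueFree G hcf (Quotient.exact h)

lemma numPkFree_of_cliqueFree (G : SimpleGraph (Fin n)) {k : ℕ} (hcf : G.CliqueFree k) (r : ℕ) :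
    numPkFree G r k 2 = r ^ G.edgeSet.ncard := by
  rw [numPkFree_eq_pow, card_classes_of_cliqueFree G hcf]

lemma numPkFree_turanGraph {k : ℕ} (hk : 3 ≤ k) (r : ℕ) :
    numPkFree (SimpleGraph.turanGraph n (k - 1)) r k 2 = r ^ turanNum n k := by
  have hcf : (SimpleGraph.turanGraph n (k - 1)).CliqueFree k := by
    have := SimpleGraph.turanGraph_cliqueFree (n := n) (r := k - 1) (by omega)
    rwa [show k - 1 + 1 = k by omega] at this
  rw [numPkFree_of_cliqueFree _ hcf, turanGraph_ncard hk]

lemma maxPkFree_eq {k r : ℕ} (hk : 3 ≤ k) (hr : 1 ≤ r) :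
    maxPkFree n r k 2 = r ^ turanNum n k := by
  have hub : ∀ N ∈ {N | ∃ G : SimpleGraph (Fin n), numPkFree G r k 2 = N},
      N ≤ r ^ turanNum n k := by
    rintro N ⟨G, rfl⟩; exact numPkFree_le G hk hr
  apply le_antisymm
  · exact csSup_le ⟨numPkFree (⊥ : SimpleGraph (Fin n)) r k 2, ⟨⊥, rfl⟩⟩ hub
  · exact le_csSup ⟨r ^ turanNum n k, hub⟩
      ⟨SimpleGraph.turanGraph n (k - 1), numPkFree_turanGraph hk r⟩

end ERExt

namespace ERExt

variable {n : ℕ}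

lemma cliqueFree_of_max (G : SimpleGraph (Fin n))
    (hG : Nat.card (Quotient (est G 3)) = turanNum n 3) : G.CliqueFree 3 := by
  classical
  by_contra hncf
  rw [SimpleGraph.CliqueFree] at hncf
  push_neg at hncf
  obtain ⟨t, ht⟩ := hncf
  rw [SimpleGraph.is3Clique_iff] at ht
  obtain ⟨a, b, c, hab, hac, hbc, rfl⟩ := ht
  have htcl : G.IsNClique 3 ({a, b, c} : Finset (Fin n)) :=
    SimpleGraph.is3Clique_iff.mpr ⟨a, b, c, hab, hac, hbc, rfl⟩
  set e0 : G.edgeSet := ⟨s(a, b), hab⟩ with he0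
  set rep : Quotient (est G 3) → G.edgeSet :=
    fun q => if q = Quotient.mk (est G 3) e0 then e0 else q.out with hrepdef
  have hrep : ∀ q, Quotient.mk (est G 3) (rep q) = q := by
    intro q
    by_cases h : q = Quotient.mk (est G 3) e0
    · simp [hrepdef, h]
    · simp [hrepdef, h, Quotient.out_eq]
  obtain ⟨H, hHcf, hHedge, hHcard⟩ := exists_repGraph G (le_refl 3) rep hrep
  have htm : H.IsTuranMaximal 2 := by
    refine ⟨hHcf, fun H' _ hH' => ?_⟩
    rw [← ncard_eq_card_edgeFinset, ← ncard_eq_card_edgeFinset, hHcard, hG]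
    exact le_turanNum H' hH'
  obtain ⟨φ⟩ := htm.nonempty_iso_turanGraph
  have hpart : ∀ v w, H.Adj v w ↔ (φ v) % (2 : ℕ) ≠ (φ w) % (2 : ℕ) :=
    fun v w => φ.map_adj_iff.symm
  have key : ∀ (g : G.edgeSet), (∀ v ∈ (g : Sym2 (Fin n)), v ∈ ({a, b, c} : Finset (Fin n))) →
      (g : Sym2 (Fin n)) ∈ H.edgeSet → g = e0 := by
    intro g hg hgH
    rw [hHedge] at hgH
    obtain ⟨q, hq⟩ := hgH
    have hrepq : rep q = g := Subtype.ext hq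
    have hqg : q = Quotient.mk (est G 3) g := by rw [← hrep q, hrepq]
    have hq0 : Quotient.mk (est G 3) g = Quotient.mk (est G 3) e0 := by
      apply Quotient.sound
      refine Relation.EqvGen.rel _ _ ⟨{a, b, c}, htcl, hg, ?_⟩
      intro v hv
      rcases Sym2.mem_iff.mp hv with rfl | rfl <;> simp
    rw [← hrepq, hrepdef]
    simp [hqg, hq0]
  have habH : s(a, b) ∈ H.edgeSet := by
    rw [hHedge]
    exact ⟨Quotient.mk (est G 3) e0, by simp [hrepdef, he0]⟩
  have hpab : (φ a) % (2 : ℕ) ≠ (φ b) % (2 : ℕ) := (hpart a b).mp (H.mem_edgeSet.mp habH)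
  by_cases hpc : (φ a) % (2 : ℕ) = (φ c) % (2 : ℕ)
  · have hbcH : H.Adj b c := (hpart b c).mpr (fun h => hpab (hpc.trans h.symm))
    have hkey := key ⟨s(b, c), hbc⟩
      (by intro v hv; rcases Sym2.mem_iff.mp hv with rfl | rfl <;> simp)
      (H.mem_edgeSet.mpr hbcH)
    have hval : s(b, c) = s(a, b) := congrArg Subtype.val hkey
    rw [Sym2.eq_iff] at hval
    rcases hval with ⟨h1, _⟩ | ⟨_, h2⟩
    · exact hab.ne h1.symm
    · exact hac.ne h2.symm
  · have hacH : H.Adj a c := (hpart a c).mpr hpc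
    have hkey := key ⟨s(a, c), hac⟩
      (by intro v hv; rcases Sym2.mem_iff.mp hv with rfl | rfl <;> simp)
      (H.mem_edgeSet.mpr hacH)
    have hval : s(a, c) = s(a, b) := congrArg Subtype.val hkey
    exact hbc.ne (Sym2.congr_right.mp hval).symm

lemma unique_max (G : SimpleGraph (Fin n)) {r : ℕ} (hr : 2 ≤ r)
    (hG : numPkFree G r 3 2 = maxPkFree n r 3 2) :
    Nonempty (G ≃g SimpleGraph.turanGraph n 2) := by
  classical
  rw [maxPkFree_eq (le_refl 3) (by omega), numPkFree_eq_pow] at hG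
  have hcQ : Nat.card (Quotient (est G 3)) = turanNum n 3 := Nat.pow_right_injective hr hG
  have hcf : G.CliqueFree 3 := cliqueFree_of_max G hcQ
  have hnc : G.edgeSet.ncard = turanNum n 3 := by rw [← card_classes_of_cliqueFree G hcf, hcQ]
  have htm : G.IsTuranMaximal 2 := by
    refine ⟨hcf, fun H' _ hH' => ?_⟩
    rw [← ncard_eq_card_edgeFinset, ← ncard_eq_card_edgeFinset, hnc]
    exact le_turanNum H' hH'
  have h2 := htm.nonempty_iso_turanGraph
  rwa [Fintype.card_fin] at h2

end ERExt

namespace ERExt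

/-- The case `s = 2`: the Turán graph is optimal for all `r ≥ 2` and `n ≥ 2`, and for `k = 3`
it is the unique optimal graph. -/
theorem thm_s_eq_two (k r n : ℕ) (hk : 3 ≤ k) (hr : 2 ≤ r) (hn : 2 ≤ n) :
    maxPkFree n r k 2 = numPkFree (turanGraph n (k - 1)) r k 2 ∧
    numPkFree (turanGraph n (k - 1)) r k 2 = r ^ turanNum n k ∧
    (k = 3 → ∀ G : SimpleGraph (Fin n),
      numPkFree G r 3 2 = maxPkFree n r 3 2 → Nonempty (G ≃g turanGraph n 2)) := by
  refine ⟨?_, numPkFree_turanGraph hk r, fun _ G hG => unique_max G hr hG⟩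
  rw [maxPkFree_eq hk (by omega), numPkFree_turanGraph hk r]

end ERExt
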